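/- The composite map θ̂ sending x to f̂(τ̂₀(x)) (first apply τ̂₀, then f̂) is an algebra automorphism of Ĥ that satisfies θ̂(â_i) = â_{i+1} for every i ∈ ℤ. -/

import Mathlib

namespace HatAlgebra

/-- Basis of the algebra `Ĥ`: vectors `â i` for `i : ℤ`, `ŝ_{0̄,j}` for `j` a positive
integer, and `ŝ_{1̄,3k}`, `ŝ_{2̄,3k}` for `k` a positive integer. -/
inductive HatB : Type
  | a : ℤ → HatB
  | s0 : ℕ+ → HatB
  | s1 : ℕ+ → HatB
  | s2 : ℕ+ → HatB
  deriving DecidableEq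

variable (F : Type*) [Field F]

/-- The underlying vector space of `Ĥ`: the free `F`-vector space on `HatB`. -/
abbrev HatH : Type _ := HatB →₀ F

/-- The basis vector `â i`. -/
noncomputable def aHat (i : ℤ) : HatH F := Finsupp.single (HatB.a i) 1

/-- The element `ŝ_{r̄,j}` of `Ĥ`, with the conventions `ŝ_{r̄,0} = 0` and
`ŝ_{1̄,j} = ŝ_{0̄,j} = ŝ_{2̄,j}` whenever `3 ∤ j`. -/
noncomputable def sHat (r : ZMod 3) (j : ℕ) : HatH F :=
  if h : j = 0 then 0
  else if h3 : 3 ∣ j then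
    if r = 0 then Finsupp.single (HatB.s0 ⟨j, Nat.pos_of_ne_zero h⟩) 1
    else if r = 1 then
      Finsupp.single (HatB.s1 ⟨j / 3,
        Nat.div_pos (Nat.le_of_dvd (Nat.pos_of_ne_zero h) h3) (by norm_num)⟩) 1
    else
      Finsupp.single (HatB.s2 ⟨j / 3,
        Nat.div_pos (Nat.le_of_dvd (Nat.pos_of_ne_zero h) h3) (by norm_num)⟩) 1
  else Finsupp.single (HatB.s0 ⟨j, Nat.pos_of_ne_zero h⟩) 1

/-- The operation `∗`: `(−1) ∗ 1̄ = −1`, `(−1) ∗ 2̄ = 1`, `0 ∗ t̄ = 0`. -/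
def hatStar (x : ℤ) (t : ZMod 3) : ℤ :=
  if x = 0 then 0 else if t = 1 then -1 else if t = 2 then 1 else 0

/-- The coefficient `(δ_{ī,r̄} − 1) ∗ (ī − r̄)` appearing in rule (Ĥ2). -/
def hatC (i r : ZMod 3) : ℤ := hatStar ((if i = r then 1 else 0) - 1) (i - r)

/-- Rule (Ĥ2): the product `â_i · ŝ_{r̄,j}`. -/
noncomputable def aMulS (i : ℤ) (r : ZMod 3) (j : ℕ) : HatH F :=
  (-2 : F) • aHat F i + (aHat F (i - (j : ℤ)) + aHat F (i + (j : ℤ))) - sHat F r j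
    - (hatC (i : ZMod 3) r : F) • (sHat F (r - 1) j - sHat F (r + 1) j)

/-- `ŝ_{0̄,n} + ŝ_{1̄,n} + ŝ_{2̄,n}`. -/
noncomputable def sSum (n : ℕ) : HatH F := sHat F 0 n + sHat F 1 n + sHat F 2 n

/-- For `r ≠ t` in `ℤ/3ℤ`, the signed sum `ŝ_{r̄,n} + ŝ_{t̄,n} − ŝ_{m̄,n}` where `m̄`
is the third residue class (appearing in rules (Ĥ5), (Ĥ6), (Ĥ7)). -/
noncomputable def sT (r t : ZMod 3) (n : ℕ) : HatH F :=
  sHat F r n + sHat F t n - sHat F (-(r + t)) n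

/-- Rules (Ĥ3)–(Ĥ7): the product `ŝ_{r̄,i} · ŝ_{t̄,j}`. -/
noncomputable def sMulS (r : ZMod 3) (i : ℕ) (t : ZMod 3) (j : ℕ) : HatH F :=
  if 3 ∣ i ∧ 3 ∣ j then
    if r = t then
      (2 : F) • (sHat F r i + sHat F r j) - (sHat F r (Nat.dist i j) + sHat F r (i + j))
    else
      (2 : F) • (sT F r t i + sT F r t j) - (sT F r t (Nat.dist i j) + sT F r t (i + j))
  else
    (2 : F) • (sHat F r i + sHat F t j) - (2 : F) • (sSum F (Nat.dist i j) + sSum F (i + j))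

/-- The product of `Ĥ` on basis vectors, given by rules (Ĥ1)–(Ĥ7) (extended
symmetrically, since the product is commutative). -/
noncomputable def mulB : HatB → HatB → HatH F
  | .a i, .a j => (-2 : F) • (aHat F i + aHat F j) + sHat F (i : ZMod 3) (i - j).natAbs
  | .a i, .s0 j => aMulS F i 0 (j : ℕ)
  | .s0 j, .a i => aMulS F i 0 (j : ℕ)
  | .a i, .s1 k => aMulS F i 1 (3 * (k : ℕ))
  | .s1 k, .a i => aMulS F i 1 (3 * (k : ℕ))
  | .a i, .s2 k => aMulS F i 2 (3 * (k : ℕ))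
  | .s2 k, .a i => aMulS F i 2 (3 * (k : ℕ))
  | .s0 i, .s0 j => sMulS F 0 (i : ℕ) 0 (j : ℕ)
  | .s0 i, .s1 k => sMulS F 0 (i : ℕ) 1 (3 * (k : ℕ))
  | .s1 k, .s0 i => sMulS F 0 (i : ℕ) 1 (3 * (k : ℕ))
  | .s0 i, .s2 k => sMulS F 0 (i : ℕ) 2 (3 * (k : ℕ))
  | .s2 k, .s0 i => sMulS F 0 (i : ℕ) 2 (3 * (k : ℕ))
  | .s1 h, .s1 k => sMulS F 1 (3 * (h : ℕ)) 1 (3 * (k : ℕ))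
  | .s1 h, .s2 k => sMulS F 1 (3 * (h : ℕ)) 2 (3 * (k : ℕ))
  | .s2 k, .s1 h => sMulS F 1 (3 * (h : ℕ)) 2 (3 * (k : ℕ))
  | .s2 h, .s2 k => sMulS F 2 (3 * (h : ℕ)) 2 (3 * (k : ℕ))

/-- The commutative bilinear product of `Ĥ`, as a bilinear map. -/
noncomputable def hatMul : HatH F →ₗ[F] HatH F →ₗ[F] HatH F :=
  Finsupp.lift (HatH F →ₗ[F] HatH F) F HatB fun x => Finsupp.lift (HatH F) F HatB (mulB F x)

/-- The product of two elements of `Ĥ`. -/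
noncomputable def hmul (x y : HatH F) : HatH F := hatMul F x y


/-- The linear map `τ̂₀`, determined on basis vectors by `â_i ↦ â_{−i}`,
`ŝ_{0̄,j} ↦ ŝ_{0̄,j}`, `ŝ_{1̄,3k} ↦ ŝ_{2̄,3k}`, `ŝ_{2̄,3k} ↦ ŝ_{1̄,3k}`. -/
noncomputable def tau0B : HatB → HatH F
  | .a i => aHat F (-i)
  | .s0 j => sHat F 0 (j : ℕ)
  | .s1 k => sHat F 2 (3 * (k : ℕ))
  | .s2 k => sHat F 1 (3 * (k : ℕ))

noncomputable def tau0 : HatH F →ₗ[F] HatH F := Finsupp.lift (HatH F) F HatB (tau0B F)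

/-- The linear map `f̂`, determined on basis vectors by `â_i ↦ â_{−i+1}`,
`ŝ_{0̄,j} ↦ ŝ_{0̄,j}` for `3 ∤ j`, `ŝ_{0̄,3k} ↦ ŝ_{1̄,3k}`, `ŝ_{1̄,3k} ↦ ŝ_{0̄,3k}`,
`ŝ_{2̄,3k} ↦ ŝ_{2̄,3k}`. -/
noncomputable def fHatB : HatB → HatH F
  | .a i => aHat F (-i + 1)
  | .s0 j => sHat F 1 (j : ℕ)
  | .s1 k => sHat F 0 (3 * (k : ℕ))
  | .s2 k => sHat F 2 (3 * (k : ℕ))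

noncomputable def fHat : HatH F →ₗ[F] HatH F := Finsupp.lift (HatH F) F HatB (fHatB F)

/-!
`τ̂₀` and `f̂` are the reflections `i ↦ −i` and `i ↦ 1 − i`, applied at once to the index of
`â_i` and to the residue `r̄` of `ŝ_{r̄,n}`. Written in terms of the elements `â_i` and `ŝ_{r̄,n}`,
the rules (Ĥ1)–(Ĥ7) are invariant under every reflection `i ↦ m − i`: in (Ĥ2) the coefficient
`(δ_{ī,r̄} − 1) ∗ (ī − r̄)` changes sign exactly when `ŝ_{r̄−1̄,j}` and `ŝ_{r̄+1̄,j}` trade places.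
So `τ̂₀` and `f̂` are involutive algebra automorphisms, and their composite sends `â_i` to
`â_{1−(−i)} = â_{i+1}`.
-/

section Reflections

variable {F}

lemma lift_single_one {M : Type*} [AddCommMonoid M] [Module F M] (g : HatB → M) (b : HatB) :
    Finsupp.lift M F HatB g (Finsupp.single b 1) = g b := by
  rw [Finsupp.lift_apply, Finsupp.sum_single_index (zero_smul F (g b)), one_smul]

lemma sHat_zero_right (r : ZMod 3) : sHat F r 0 = 0 := by
  simp [sHat]

lemma sHat_of_not_dvd (r : ZMod 3) {n : ℕ} (h : ¬ 3 ∣ n) : sHat F r n = sHat F 0 n := by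
  have hn : n ≠ 0 := by rintro rfl; exact h (dvd_zero 3)
  simp [sHat, hn, h]

lemma sHat_zero_coe (j : ℕ+) : sHat F 0 j = Finsupp.single (HatB.s0 j) 1 := by
  simp only [sHat, j.ne_zero, reduceDIte, reduceIte, dite_eq_ite, ite_self]
  rfl

lemma sHat_one_three_mul (k : ℕ+) : sHat F 1 (3 * k) = Finsupp.single (HatB.s1 k) 1 := by
  simp only [sHat, mul_eq_zero, OfNat.ofNat_ne_zero, k.ne_zero, or_self, reduceDIte, dvd_mul_right,
    one_ne_zero, reduceIte, mul_div_cancel_left₀, ne_eq, not_false_eq_true]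
  rfl

lemma sHat_two_three_mul (k : ℕ+) : sHat F 2 (3 * k) = Finsupp.single (HatB.s2 k) 1 := by
  simp only [sHat, mul_eq_zero, OfNat.ofNat_ne_zero, k.ne_zero, or_self, reduceDIte, dvd_mul_right,
    show (2 : ZMod 3) ≠ 0 by decide, show (2 : ZMod 3) ≠ 1 by decide, reduceIte,
    mul_div_cancel_left₀, ne_eq, not_false_eq_true]
  rfl

def generators : Set (HatH F) :=
  Set.range (aHat F) ∪ {x | ∃ r n, n ≠ 0 ∧ x = sHat F r n}

lemma single_mem_generators (b : HatB) : Finsupp.single b 1 ∈ generators (F := F) := by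
  cases b with
  | a i => exact Or.inl ⟨i, rfl⟩
  | s0 j => exact Or.inr ⟨0, j, j.ne_zero, (sHat_zero_coe j).symm⟩
  | s1 k => exact Or.inr ⟨1, 3 * k, by positivity, (sHat_one_three_mul k).symm⟩
  | s2 k => exact Or.inr ⟨2, 3 * k, by positivity, (sHat_two_three_mul k).symm⟩

lemma linearMap_ext_generators {M : Type*} [AddCommMonoid M] [Module F M]
    {φ ψ : HatH F →ₗ[F] M} (h : ∀ x ∈ generators, φ x = ψ x) : φ = ψ :=
  Finsupp.lhom_ext' fun b => LinearMap.ext_ring (h _ (single_mem_generators b))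

lemma bilinMap_ext_generators {M : Type*} [AddCommMonoid M] [Module F M]
    {B B' : HatH F →ₗ[F] HatH F →ₗ[F] M}
    (h : ∀ x ∈ generators, ∀ y ∈ generators, B x y = B' x y) : B = B' :=
  linearMap_ext_generators fun x hx => linearMap_ext_generators fun y hy => h x hx y hy

lemma lift_sHat {M : Type*} [AddCommMonoid M] [Module F M] (g : HatB → M)
    (G : ZMod 3 → ℕ → M) (h0 : ∀ j : ℕ+, g (.s0 j) = G 0 j)
    (h1 : ∀ k : ℕ+, g (.s1 k) = G 1 (3 * k)) (h2 : ∀ k : ℕ+, g (.s2 k) = G 2 (3 * k))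
    (hG : ∀ r n, ¬ 3 ∣ n → G r n = G 0 n) (r : ZMod 3) {n : ℕ} (hn : n ≠ 0) :
    Finsupp.lift M F HatB g (sHat F r n) = G r n := by
  by_cases h3 : 3 ∣ n
  · obtain ⟨k, rfl⟩ := h3
    lift k to ℕ+ using Nat.pos_of_ne_zero (right_ne_zero_of_mul hn)
    obtain rfl | rfl | rfl : r = 0 ∨ r = 1 ∨ r = 2 := by revert r; decide
    · rw [show sHat F 0 (3 * k) = _ from sHat_zero_coe ⟨3 * k, by positivity⟩,
        lift_single_one]
      exact h0 _
    · rw [sHat_one_three_mul, lift_single_one, h1]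
    · rw [sHat_two_three_mul, lift_single_one, h2]
  · rw [sHat_of_not_dvd r h3, hG r n h3]
    lift n to ℕ+ using Nat.pos_of_ne_zero hn
    rw [sHat_zero_coe, lift_single_one, h0]

lemma hmul_single_left (b : HatB) (y : HatH F) :
    hmul F (Finsupp.single b 1) y = Finsupp.lift (HatH F) F HatB (mulB F b) y := by
  rw [hmul, hatMul, lift_single_one]

lemma hmul_single_single (b c : HatB) :
    hmul F (Finsupp.single b 1) (Finsupp.single c 1) = mulB F b c := by
  rw [hmul_single_left, lift_single_one]

lemma hmul_eq_lift (x y : HatH F) :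
    hmul F x y = Finsupp.lift (HatH F) F HatB (fun b => hmul F (Finsupp.single b 1) y) x :=
  (DFunLike.congr_fun ((Finsupp.lift (HatH F) F HatB).apply_symm_apply ((hatMul F).flip y)) x).symm

lemma aMulS_of_not_dvd (i : ℤ) (r : ZMod 3) {n : ℕ} (h : ¬ 3 ∣ n) :
    aMulS F i r n = aMulS F i 0 n := by
  simp only [aMulS, sHat_of_not_dvd _ h, sub_self, smul_zero]

lemma sMulS_comm (r t : ZMod 3) (i j : ℕ) : sMulS F r i t j = sMulS F t j r i := by
  have hT (n : ℕ) : sT F r t n = sT F t r n := by rw [sT, sT, add_comm r t, add_comm (sHat F r n)]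
  unfold sMulS
  by_cases h : 3 ∣ i ∧ 3 ∣ j
  · rw [if_pos h, if_pos h.symm, Nat.dist_comm, add_comm i j]
    by_cases hrt : r = t
    · subst hrt; rw [if_pos rfl, if_pos rfl, add_comm (sHat F r i)]
    · rw [if_neg hrt, if_neg (Ne.symm hrt)]
      simp only [hT, add_comm (sT F t r i)]
  · rw [if_neg h, if_neg (mt And.symm h), Nat.dist_comm, add_comm i j, add_comm (sHat F r i)]

lemma sMulS_of_not_dvd_left (r t : ZMod 3) {i : ℕ} (h : ¬ 3 ∣ i) (j : ℕ) :
    sMulS F r i t j = sMulS F 0 i t j := by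
  simp only [sMulS, h, false_and, if_false, sHat_of_not_dvd r h]

lemma sMulS_of_not_dvd_right (r t : ZMod 3) (i : ℕ) {j : ℕ} (h : ¬ 3 ∣ j) :
    sMulS F r i t j = sMulS F r i 0 j := by
  simp only [sMulS, h, and_false, if_false, sHat_of_not_dvd t h]

lemma hmul_aHat_aHat (i j : ℤ) :
    hmul F (aHat F i) (aHat F j) = (-2 : F) • (aHat F i + aHat F j) + sHat F i (i - j).natAbs :=
  hmul_single_single _ _

lemma hmul_aHat_sHat (i : ℤ) (r : ZMod 3) {n : ℕ} (hn : n ≠ 0) :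
    hmul F (aHat F i) (sHat F r n) = aMulS F i r n := by
  rw [aHat, hmul_single_left]
  exact lift_sHat _ (aMulS F i) (fun _ => rfl) (fun _ => rfl) (fun _ => rfl)
    (fun r _ h => aMulS_of_not_dvd i r h) r hn

lemma hmul_sHat_aHat (r : ZMod 3) {n : ℕ} (hn : n ≠ 0) (i : ℤ) :
    hmul F (sHat F r n) (aHat F i) = aMulS F i r n := by
  rw [hmul_eq_lift]
  exact lift_sHat _ (fun r n => aMulS F i r n) (fun _ => hmul_single_single _ _)
    (fun _ => hmul_single_single _ _) (fun _ => hmul_single_single _ _)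
    (fun r _ h => aMulS_of_not_dvd i r h) r hn

lemma hmul_sHat_sHat (r : ZMod 3) {i : ℕ} (hi : i ≠ 0) (t : ZMod 3) {j : ℕ} (hj : j ≠ 0) :
    hmul F (sHat F r i) (sHat F t j) = sMulS F r i t j := by
  have hG (r : ZMod 3) (i : ℕ) : ∀ t n, ¬ 3 ∣ n → sMulS F r i t n = sMulS F r i 0 n :=
    fun t _ h => sMulS_of_not_dvd_right r t i h
  rw [hmul_eq_lift]
  refine lift_sHat _ (fun r i => sMulS F r i t j) (fun i' => ?_) (fun k => ?_) (fun k => ?_)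
    (fun r _ h => sMulS_of_not_dvd_left r t h j) r hi <;>
  rw [hmul_single_left]
  · exact lift_sHat _ (sMulS F 0 i') (fun _ => rfl) (fun _ => rfl) (fun _ => rfl) (hG 0 i') t hj
  · exact lift_sHat _ (sMulS F 1 (3 * k)) (fun _ => sMulS_comm _ _ _ _) (fun _ => rfl)
      (fun _ => rfl) (hG 1 _) t hj
  · exact lift_sHat _ (sMulS F 2 (3 * k)) (fun _ => sMulS_comm _ _ _ _)
      (fun _ => sMulS_comm _ _ _ _) (fun _ => rfl) (hG 2 _) t hj

structure IsReflection (m : ℤ) (φ : HatH F →ₗ[F] HatH F) : Prop where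
  map_aHat : ∀ i, φ (aHat F i) = aHat F (m - i)
  map_sHat : ∀ r n, φ (sHat F r n) = sHat F (m - r) n

lemma isReflection_lift (m : ℤ) (g : HatB → HatH F) (ha : ∀ i, g (.a i) = aHat F (m - i))
    (h0 : ∀ j : ℕ+, g (.s0 j) = sHat F (m - 0) j)
    (h1 : ∀ k : ℕ+, g (.s1 k) = sHat F (m - 1) (3 * k))
    (h2 : ∀ k : ℕ+, g (.s2 k) = sHat F (m - 2) (3 * k)) :
    IsReflection m (Finsupp.lift (HatH F) F HatB g) where
  map_aHat i := by rw [aHat, lift_single_one, ha]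
  map_sHat r n := by
    rcases eq_or_ne n 0 with rfl | hn
    · rw [sHat_zero_right, sHat_zero_right, map_zero]
    exact lift_sHat g (fun r n => sHat F (m - r) n) h0 h1 h2
      (fun r _ h => by rw [sHat_of_not_dvd _ h, sHat_of_not_dvd (m - 0) h]) r hn

lemma tau0_isReflection : IsReflection 0 (tau0 F) :=
  isReflection_lift 0 _ (fun i => congrArg (aHat F) (zero_sub i).symm)
    (fun _ => congrArg (sHat F · _) (by decide)) (fun _ => congrArg (sHat F · _) (by decide))
    (fun _ => congrArg (sHat F · _) (by decide))

lemma fHat_isReflection : IsReflection 1 (fHat F) :=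
  isReflection_lift 1 _ (fun i => congrArg (aHat F) (neg_add_eq_sub i 1))
    (fun _ => congrArg (sHat F · _) (by decide)) (fun _ => congrArg (sHat F · _) (by decide))
    (fun _ => congrArg (sHat F · _) (by decide))

lemma sSum_eq_sum (n : ℕ) : sSum F n = ∑ r : ZMod 3, sHat F r n := by
  rw [sSum]
  exact (Fin.sum_univ_three (M := HatH F) (sHat F · n)).symm

lemma hatC_sub_sub (m a r : ZMod 3) : hatC (m - a) (m - r) = -hatC a r := by
  revert m a r; decide

namespace IsReflection

variable {m : ℤ} {φ : HatH F →ₗ[F] HatH F}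

lemma involutive (hφ : IsReflection m φ) : Function.Involutive φ := by
  have h : φ.comp φ = LinearMap.id := linearMap_ext_generators <| by
    rintro _ (⟨i, rfl⟩ | ⟨r, n, -, rfl⟩)
    · simp [hφ.map_aHat]
    · simp [hφ.map_sHat]
  exact fun x => LinearMap.congr_fun h x

lemma map_sSum (hφ : IsReflection m φ) (n : ℕ) : φ (sSum F n) = sSum F n := by
  simp only [sSum_eq_sum, map_sum, hφ.map_sHat]
  exact (Equiv.subLeft (m : ZMod 3)).sum_comp (sHat F · n)

-- the third index `-(r + t)` is reflected correctly because `3 m = 0` in `ℤ/3ℤ`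
lemma map_sT (hφ : IsReflection m φ) (r t : ZMod 3) (n : ℕ) :
    φ (sT F r t n) = sT F (m - r) (m - t) n := by
  have h (c : ZMod 3) : c - -(r + t) = -(c - r + (c - t)) := by revert c r t; decide
  simp only [sT, map_sub, map_add, hφ.map_sHat, h]

lemma map_aMulS (hφ : IsReflection m φ) (i : ℤ) (r : ZMod 3) (n : ℕ) :
    φ (aMulS F i r n) = aMulS F (m - i) (m - r) n := by
  simp only [aMulS, map_sub, map_add, map_smul, hφ.map_aHat, hφ.map_sHat, Int.cast_sub,
    hatC_sub_sub, Int.cast_neg]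
  rw [show m - (i - n) = m - i + n by ring, show m - (i + n) = m - i - n by ring,
    show (m : ZMod 3) - (r - 1) = m - r + 1 by ring,
    show (m : ZMod 3) - (r + 1) = m - r - 1 by ring]
  module

lemma map_sMulS (hφ : IsReflection m φ) (r : ZMod 3) (i : ℕ) (t : ZMod 3) (j : ℕ) :
    φ (sMulS F r i t j) = sMulS F (m - r) i (m - t) j := by
  unfold sMulS
  split_ifs with _ hrt hrt' hrt'
  · simp only [map_sub, map_smul, map_add, hφ.map_sHat]
  · exact absurd (congrArg _ hrt) hrt'
  · exact absurd (sub_right_injective hrt') hrt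
  · simp only [map_sub, map_smul, map_add, hφ.map_sT]
  · simp only [map_sub, map_smul, map_add, hφ.map_sHat, hφ.map_sSum]

lemma map_hmul (hφ : IsReflection m φ) (x y : HatH F) :
    φ (hmul F x y) = hmul F (φ x) (φ y) := by
  have h : (hatMul F).compr₂ φ = (hatMul F).compl₁₂ φ φ := bilinMap_ext_generators <| by
    rintro _ (⟨i, rfl⟩ | ⟨r, n, hn, rfl⟩) _ (⟨j, rfl⟩ | ⟨t, k, hk, rfl⟩) <;>
      change φ (hmul F _ _) = hmul F (φ _) (φ _) <;>
      simp only [hφ.map_aHat, hφ.map_sHat]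
    · rw [hmul_aHat_aHat, hmul_aHat_aHat, map_add, map_smul, map_add, hφ.map_aHat,
        hφ.map_aHat, hφ.map_sHat, show m - i - (m - j) = -(i - j) by ring, Int.natAbs_neg,
        Int.cast_sub]
    · rw [hmul_aHat_sHat _ _ hk, hmul_aHat_sHat _ _ hk, hφ.map_aMulS]
    · rw [hmul_sHat_aHat _ hn, hmul_sHat_aHat _ hn, hφ.map_aMulS]
    · rw [hmul_sHat_sHat _ hn _ hk, hmul_sHat_sHat _ hn _ hk, hφ.map_sMulS]
  exact LinearMap.congr_fun₂ h x y

end IsReflection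

end Reflections

theorem theta_automorphism :
    Function.Bijective (fun x : HatH F => fHat F (tau0 F x)) ∧
      (∀ x y : HatH F, fHat F (tau0 F (hmul F x y)) =
        hmul F (fHat F (tau0 F x)) (fHat F (tau0 F y))) ∧
      ∀ i : ℤ, fHat F (tau0 F (aHat F i)) = aHat F (i + 1) := by
  refine ⟨fHat_isReflection.involutive.bijective.comp tau0_isReflection.involutive.bijective,
    fun x y => ?_, fun i => ?_⟩
  · rw [tau0_isReflection.map_hmul, fHat_isReflection.map_hmul]
  · rw [tau0_isReflection.map_aHat, fHat_isReflection.map_aHat]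
    congr 1
    ring

end HatAlgebra
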